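/- Let q ≥ 1, N ≥ 0 be integers. The ℂ-linear map sending a polynomial p of degree < q(N+1) to the sequence of coefficients of the formal power series p(z)/(1-z^q)^{N+1} restricted to any set A ⊆ ℕ satisfying |A ∩ (j+qℤ)| ≥ N+1 for all 0 ≤ j < q, is injective. Equivalently: if p has degree < q(N+1) and the coefficient of z^k in p(z)/(1-z^q)^{N+1} vanishes for all k ∈ A, then p = 0. -/

import Mathlib

/-!
Write `f_j m` for the coefficient of `z ^ (j + q * m)` in `F`. Multiplying by `1 - z ^ q` acts
on every `f_j` as the forward difference, so the coefficient of `z ^ (j + q * (m + N + 1))` in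
`F * (1 - z ^ q) ^ (N + 1) = p` is `Δ^(N+1) f_j m`, which vanishes because `deg p < q * (N + 1)`.
By Newton's forward-difference formula `f_j` is then a polynomial of degree `≤ N` in `m`, and the
`N + 1` elements of `A` congruent to `j` give it `N + 1` zeros. Hence every `f_j` vanishes,
so `F = 0` and `p = 0`.
-/

open Finset Polynomial fwdDiff

lemma fwdDiff_iter_eq_zero_of_le {M G : Type*} [AddCommMonoid M] [AddCommGroup G] {h : M}
    {f : M → G} {n t : ℕ} (hf : Δ_[h] ^[n] f = 0) (hnt : n ≤ t) : Δ_[h] ^[t] f = 0 := by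
  rw [← Nat.sub_add_cancel hnt, Function.iterate_add_apply, hf]
  exact Function.iterate_fixed (fwdDiff_const h 0) _

lemma eq_sum_range_choose_smul_fwdDiff_iter {G : Type*} [AddCommGroup G] {f : ℕ → G} {n : ℕ}
    (hf : Δ_[1] ^[n + 1] f = 0) (m : ℕ) :
    f m = ∑ t ∈ range (n + 1), m.choose t • Δ_[1] ^[t] f 0 := by
  have hvanish : ∀ t ∈ range (m + n + 1), t ∉ range (m + 1) ∨ t ∉ range (n + 1) →
      m.choose t • Δ_[1] ^[t] f 0 = 0 := by
    rintro t - (ht | ht) <;> rw [mem_range, not_lt] at ht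
    · rw [Nat.choose_eq_zero_of_lt ht, zero_smul]
    · rw [fwdDiff_iter_eq_zero_of_le hf ht, Pi.zero_apply, smul_zero]
  have h := shift_eq_sum_fwdDiff_iter 1 f m 0
  rw [zero_add, smul_eq_mul, mul_one] at h
  rw [h, sum_subset (range_subset_range.2 (by omega : m + 1 ≤ m + n + 1))
      (fun t ht ht' => hvanish t ht (.inl ht')),
    sum_subset (range_subset_range.2 (by omega : n + 1 ≤ m + n + 1))
      (fun t ht ht' => hvanish t ht (.inr ht'))]

lemma exists_polynomial_of_fwdDiff_iter_eq_zero {K : Type*} [Field K] [CharZero K]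
    {f : ℕ → K} {n : ℕ} (hf : Δ_[1] ^[n + 1] f = 0) :
    ∃ P : K[X], P.natDegree ≤ n ∧ ∀ m : ℕ, f m = P.eval (m : K) := by
  refine ⟨∑ t ∈ range (n + 1), C (Δ_[1] ^[t] f 0 / t.factorial) * descPochhammer K t, ?_,
    fun m => ?_⟩
  · refine natDegree_sum_le_of_forall_le _ _ fun t ht => ?_
    refine (natDegree_C_mul_le _ _).trans ?_
    rw [descPochhammer_natDegree]
    exact Nat.lt_succ_iff.mp (mem_range.mp ht)
  · rw [eq_sum_range_choose_smul_fwdDiff_iter hf m, eval_finsetSum]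
    refine sum_congr rfl fun t _ => ?_
    rw [eval_mul, eval_C, descPochhammer_eval_eq_descFactorial,
      Nat.descFactorial_eq_factorial_mul_choose, nsmul_eq_mul]
    have : (t.factorial : K) ≠ 0 := Nat.cast_ne_zero.mpr (Nat.factorial_ne_zero t)
    push_cast
    field_simp

lemma Polynomial.encard_setOf_eval_natCast_eq_zero_le {K : Type*} [Field K] [CharZero K]
    {P : K[X]} (hP : P ≠ 0) : {m : ℕ | P.eval (m : K) = 0}.encard ≤ P.natDegree := by
  classical
  calc {m : ℕ | P.eval (m : K) = 0}.encard
      = (Nat.cast '' {m : ℕ | P.eval (m : K) = 0} : Set K).encard :=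
        Nat.cast_injective.injOn.encard_image.symm
    _ ≤ (P.roots.toFinset : Set K).encard :=
        Set.encard_le_encard (by rintro _ ⟨m, hm, rfl⟩; simp_all)
    _ = #P.roots.toFinset := Set.encard_coe_eq_coe_finsetCard _
    _ ≤ P.natDegree := by exact_mod_cast (Multiset.toFinset_card_le _).trans (card_roots' P)

lemma eq_zero_of_fwdDiff_iter_eq_zero_of_le_encard {K : Type*} [Field K] [CharZero K]
    {f : ℕ → K} {n : ℕ} (hf : Δ_[1] ^[n + 1] f = 0)
    (hzeros : (n + 1 : ℕ∞) ≤ {m | f m = 0}.encard) :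
    f = 0 := by
  obtain ⟨P, hdeg, hP⟩ := exists_polynomial_of_fwdDiff_iter_eq_zero hf
  suffices P = 0 by funext m; simp [hP, this]
  by_contra hne
  have := hzeros.trans (by simpa only [hP] using P.encard_setOf_eval_natCast_eq_zero_le hne)
  norm_cast at this
  omega

lemma PowerSeries.coeff_add_mul_one_sub_X_pow {R : Type*} [Ring R] (G : PowerSeries R)
    (k q : ℕ) :
    coeff (k + q) (G * (1 - X ^ q)) = coeff (k + q) G - coeff k G := by
  rw [mul_sub, mul_one, map_sub, coeff_mul_X_pow]

lemma PowerSeries.coeff_mul_one_sub_X_pow_pow {R : Type*} [CommRing R] (F : PowerSeries R)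
    (q n j m : ℕ) :
    coeff (j + q * (m + n)) (F * (1 - X ^ q) ^ n) =
      Δ_[1] ^[n] (fun i => coeff (j + q * i) F) m := by
  induction n generalizing m with
  | zero => simp
  | succ n ih =>
    rw [pow_succ, ← mul_assoc, show j + q * (m + (n + 1)) = j + q * (m + n) + q by ring,
      coeff_add_mul_one_sub_X_pow, Function.iterate_succ_apply', fwdDiff, ← ih, ← ih,
      show j + q * (m + 1 + n) = j + q * (m + n) + q by ring]

lemma Set.encard_setOf_mem_mod_eq_le (A : Set ℕ) (q j : ℕ) :
    {k | k ∈ A ∧ k % q = j}.encard ≤ {m | j + q * m ∈ A}.encard := by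
  refine (Set.encard_le_encard fun k hk => ?_).trans (Set.encard_image_le (fun m => j + q * m) _)
  refine ⟨k / q, ?_, ?_⟩ <;> simp only [← hk.2, Nat.mod_add_div, Set.mem_ofPred_eq, hk.1]

theorem stmt15 (q N : ℕ) (hq : 1 ≤ q) (A : Set ℕ)
    (hA : ∀ j < q, (N + 1 : ℕ∞) ≤ {k | k ∈ A ∧ k % q = j}.encard)
    (p : Polynomial ℂ) (hdeg : p.degree < (q * (N + 1) : ℕ))
    (F : PowerSeries ℂ)
    (hF : F * (1 - PowerSeries.X ^ q) ^ (N + 1) = (p : PowerSeries ℂ))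
    (hvan : ∀ k ∈ A, PowerSeries.coeff (R := ℂ) k F = 0) :
    p = 0 := by
  have hdiff (j : ℕ) : Δ_[1] ^[N + 1] (fun m => PowerSeries.coeff (j + q * m) F) = 0 := by
    funext m
    rw [Pi.zero_apply, ← PowerSeries.coeff_mul_one_sub_X_pow_pow, hF, coeff_coe]
    refine coeff_eq_zero_of_degree_lt (hdeg.trans_le ?_)
    exact_mod_cast (by nlinarith : q * (N + 1) ≤ j + q * (m + (N + 1)))
  have hF0 : F = 0 := by
    ext k
    have hzeros := (hA _ (Nat.mod_lt k hq)).trans <| (A.encard_setOf_mem_mod_eq_le q _).trans <|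
      Set.encard_le_encard fun m hm => hvan _ hm
    simpa [Nat.mod_add_div] using
      congr_fun (eq_zero_of_fwdDiff_iter_eq_zero_of_le_encard (hdiff _) hzeros) (k / q)
  rwa [hF0, zero_mul, eq_comm, coe_eq_zero_iff] at hF
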